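/- If for every pair of complete (φ, (x, w̄ₙ), k)-conjunctions Ψ, Ψ' with Ψ' ⊨ Ψ it is not the case that both Ψ ∧ φ and Ψ' ∧ ¬φ are satisfiable, then φ(x, w̄ₙ) is logically equivalent to a finite disjunction of complete (φ, (x, w̄ₙ), k)-conjunctions, and hence to a standard x-translation of an intuitionistic formula. -/

import Mathlib

namespace IPC

/-- The classical vocabulary Σ: binary R, binary E, and for each intuitionistic
`n`-ary predicate letter indexed by `m` a classical `(n+1)`-ary letter `P n m`. -/
inductive Sym : Type
  | R : Sym
  | E : Sym
  | P : ℕ → ℕ → Sym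
  deriving DecidableEq

def Sym.arity : Sym → ℕ
  | .R => 2
  | .E => 2
  | .P n _ => n + 1

theorem Sym.arity_pos (s : Sym) : 0 < s.arity := by
  cases s <;> simp [Sym.arity]

/-- A first-order model for the vocabulary Σ. -/
structure Model : Type 1 where
  D : Type
  ne : Nonempty D
  rel : ∀ s : Sym, (Fin s.arity → D) → Prop

/-- First-order formulas (with identity) over Σ; variables are natural numbers. -/
inductive Fml : Type
  | atom (s : Sym) (args : Fin s.arity → ℕ)
  | eq (v w : ℕ)
  | fls
  | neg (φ : Fml)
  | conj (φ ψ : Fml)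
  | disj (φ ψ : Fml)
  | impl (φ ψ : Fml)
  | all (v : ℕ) (φ : Fml)
  | ex (v : ℕ) (φ : Fml)

/-- Tarskian satisfaction relative to a variable assignment. -/
def Fml.eval (M : Model) : Fml → (ℕ → M.D) → Prop
  | .atom s args, f => M.rel s (fun i => f (args i))
  | .eq v w, f => f v = f w
  | .fls, _ => False
  | .neg φ, f => ¬ φ.eval M f
  | .conj φ ψ, f => φ.eval M f ∧ ψ.eval M f
  | .disj φ ψ, f => φ.eval M f ∨ ψ.eval M f
  | .impl φ ψ, f => φ.eval M f → ψ.eval M f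
  | .all v φ, f => ∀ d : M.D, φ.eval M (Function.update f v d)
  | .ex v φ, f => ∃ d : M.D, φ.eval M (Function.update f v d)

/-- Degree: maximal nesting of quantifiers. -/
def Fml.deg : Fml → ℕ
  | .atom _ _ => 0
  | .eq _ _ => 0
  | .fls => 0
  | .neg φ => φ.deg
  | .conj φ ψ => max φ.deg ψ.deg
  | .disj φ ψ => max φ.deg ψ.deg
  | .impl φ ψ => max φ.deg ψ.deg
  | .all _ φ => φ.deg + 1
  | .ex _ φ => φ.deg + 1

/-- Free variables. -/
def Fml.free : Fml → Finset ℕ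
  | .atom _ args => Finset.univ.image args
  | .eq v w => {v, w}
  | .fls => ∅
  | .neg φ => φ.free
  | .conj φ ψ => φ.free ∪ ψ.free
  | .disj φ ψ => φ.free ∪ ψ.free
  | .impl φ ψ => φ.free ∪ ψ.free
  | .all v φ => φ.free.erase v
  | .ex v φ => φ.free.erase v

/-- All variables occurring (free or bound). -/
def Fml.vars : Fml → Finset ℕ
  | .atom _ args => Finset.univ.image args
  | .eq v w => {v, w}
  | .fls => ∅
  | .neg φ => φ.vars
  | .conj φ ψ => φ.vars ∪ ψ.vars
  | .disj φ ψ => φ.vars ∪ ψ.vars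
  | .impl φ ψ => φ.vars ∪ ψ.vars
  | .all v φ => insert v φ.vars
  | .ex v φ => insert v φ.vars

/-- Predicate symbols occurring in a formula. -/
def Fml.syms : Fml → Finset Sym
  | .atom s _ => {s}
  | .eq _ _ => ∅
  | .fls => ∅
  | .neg φ => φ.syms
  | .conj φ ψ => φ.syms ∪ ψ.syms
  | .disj φ ψ => φ.syms ∪ ψ.syms
  | .impl φ ψ => φ.syms ∪ ψ.syms
  | .all _ φ => φ.syms
  | .ex _ φ => φ.syms

/-- Σ_φ : the symbols of φ together with R and E. -/
def sigOf (φ : Fml) : Finset Sym := φ.syms ∪ {Sym.R, Sym.E}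

/-- Logical equivalence. -/
def FmlEquiv (φ ψ : Fml) : Prop :=
  ∀ (M : Model) (f : ℕ → M.D), φ.eval M f ↔ ψ.eval M f

/-- Logical consequence between single formulas. -/
def EntailsF (φ ψ : Fml) : Prop :=
  ∀ (M : Model) (f : ℕ → M.D), φ.eval M f → ψ.eval M f

/-- Logical consequence from a set of formulas. -/
def EntailsSet (Γ : Set Fml) (φ : Fml) : Prop :=
  ∀ (M : Model) (f : ℕ → M.D), (∀ ψ ∈ Γ, ψ.eval M f) → φ.eval M f

def Satisfiable (φ : Fml) : Prop := ∃ (M : Model) (f : ℕ → M.D), φ.eval M f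

/-- Intuitionistic predicate formulas (without identity); an `n`-ary letter
indexed by `m` takes `n` object variables. -/
inductive IFml : Type
  | atom (n m : ℕ) (args : Fin n → ℕ)
  | fls
  | conj (i j : IFml)
  | disj (i j : IFml)
  | impl (i j : IFml)
  | all (v : ℕ) (i : IFml)
  | ex (v : ℕ) (i : IFml)

/-- Standard x-translation.  Object variables `v` of intuitionistic formulas are
represented as the even classical variables `2*v`; world variables are odd, and
a fresh world variable for a binder under world variable `x` is `x+2`. -/
def ST : IFml → ℕ → Fml
  | .atom n m args, x => .atom (.P n m) (Fin.cons x (fun i => 2 * args i))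
  | .fls, x => .neg (.eq x x)
  | .conj i j, x => .conj (ST i x) (ST j x)
  | .disj i j, x => .disj (ST i x) (ST j x)
  | .impl i j, x =>
      .all (x + 2) (.impl (.atom .R ![x, x + 2]) (.impl (ST i (x + 2)) (ST j (x + 2))))
  | .ex w i, x => .ex (2 * w) (.conj (.atom .E ![x, 2 * w]) (ST i x))
  | .all w i, x =>
      .all (x + 2) (.all (2 * w)
        (.impl (.conj (.atom .R ![x, x + 2]) (.atom .E ![x + 2, 2 * w])) (ST i (x + 2))))

/-- `ψ` is a standard x-translation (with x the fixed variable 1). -/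
def IsSTF (ψ : Fml) : Prop := ∃ i : IFml, ψ = ST i 1

/-- Truth of `φ(x, w̄ₙ)` at the n-ary evaluation point `(M, a, b̄ₙ)`:
true under every assignment sending `x` (variable 1) to `a` and `wᵢ`
(variable `2*i`) to `bᵢ`. -/
def Sat (M : Model) (a : M.D) (bs : List M.D) (φ : Fml) : Prop :=
  ∀ f : ℕ → M.D, f 1 = a → (∀ i : Fin bs.length, f (2 * i.val) = bs.get i) → φ.eval M f

/-- Free variables of φ are among x, w₁, …, wₙ. -/
def FreeOK (n : ℕ) (φ : Fml) : Prop :=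
  ∀ v ∈ φ.free, v = 1 ∨ ∃ i < n, v = 2 * i

def relR (α : Model) (a b : α.D) : Prop := α.rel .R ![a, b]
def relE (α : Model) (a b : α.D) : Prop := α.rel .E ![a, b]

/-- Truth of the atom `P(x, w̄_l)` at `(α, a, ō_l)`. -/
def atomSat (α : Model) (P : Sym) (a : α.D) (os : List α.D) : Prop :=
  ∃ h : P.arity = os.length + 1, α.rel P (fun i => (a :: os).get (Fin.cast h i))

/-- The model named by a side: `true ↦ M`, `false ↦ N`. -/
def side (M N : Model) : Bool → Model
  | true => M
  | false => N

/-- `⟨(M,a,b̄ₙ),(N,c,d̄ₙ)⟩_k`-asimulation conditions (without the condition on the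
distinguished points).  The relation `A` relates tuples `(w̄_m, a'; ō_l)` over one
of the two models to similar tuples over one of the two models. -/
structure IsKAsim (Θ : Set Sym) (M N : Model) (n k : ℕ)
    (A : ∀ s t : Bool, List (side M N s).D → (side M N s).D → List (side M N s).D →
          List (side M N t).D → (side M N t).D → List (side M N t).D → Prop) : Prop where
  lengths : ∀ s t ws a' os ws' c' os', A s t ws a' os ws' c' os' →
      ws.length = ws'.length ∧ os.length = os'.length
  atoms : ∀ s t ws a' os ws' c' os', A s t ws a' os ws' c' os' →
      ∀ P ∈ Θ, P ≠ Sym.R → P ≠ Sym.E →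
        atomSat (side M N s) P a' os → atomSat (side M N t) P c' os'
  back : ∀ s t ws a' os ws' c' os', A s t ws a' os ws' c' os' →
      ws.length + os.length < n + k →
      ∀ c'', relR (side M N t) c' c'' →
        ∃ a'', relR (side M N s) a' a'' ∧
          A t s (ws' ++ [c']) c'' os' (ws ++ [a']) a'' os ∧
          A s t (ws ++ [a']) a'' os (ws' ++ [c']) c'' os'
  exi : ∀ s t ws a' os ws' c' os', A s t ws a' os ws' c' os' →
      ws.length + os.length < n + k →
      ∀ b'', relE (side M N s) a' b'' →
        ∃ d'', relE (side M N t) c' d'' ∧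
          A s t ws a' (os ++ [b'']) ws' c' (os' ++ [d''])
  uni : ∀ s t ws a' os ws' c' os', A s t ws a' os ws' c' os' →
      ws.length + os.length + 1 < n + k →
      ∀ c'' d'', relR (side M N t) c' c'' → relE (side M N t) c'' d'' →
        ∃ a'' b'', relR (side M N s) a' a'' ∧ relE (side M N s) a'' b'' ∧
          A s t (ws ++ [a']) a'' (os ++ [b'']) (ws' ++ [c']) c'' (os' ++ [d''])

/-- (Unparametrized) asimulation conditions. -/
structure IsAsim (Θ : Set Sym) (M N : Model)
    (A : ∀ s t : Bool, (side M N s).D → List (side M N s).D →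
          (side M N t).D → List (side M N t).D → Prop) : Prop where
  lengths : ∀ s t a' os c' os', A s t a' os c' os' → os.length = os'.length
  atoms : ∀ s t a' os c' os', A s t a' os c' os' →
      ∀ P ∈ Θ, P ≠ Sym.R → P ≠ Sym.E →
        atomSat (side M N s) P a' os → atomSat (side M N t) P c' os'
  back : ∀ s t a' os c' os', A s t a' os c' os' →
      ∀ c'', relR (side M N t) c' c'' →
        ∃ a'', relR (side M N s) a' a'' ∧ A t s c'' os' a'' os ∧ A s t a'' os c'' os'
  exi : ∀ s t a' os c' os', A s t a' os c' os' →
      ∀ b'', relE (side M N s) a' b'' →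
        ∃ d'', relE (side M N t) c' d'' ∧ A s t a' (os ++ [b'']) c' (os' ++ [d''])
  uni : ∀ s t a' os c' os', A s t a' os c' os' →
      ∀ c'' d'', relR (side M N t) c' c'' → relE (side M N t) c'' d'' →
        ∃ a'' b'', relR (side M N s) a' a'' ∧ relE (side M N s) a'' b'' ∧
          A s t a'' (os ++ [b'']) c'' (os' ++ [d''])

/-- Invariance with respect to k-asimulations (for formulas `φ(x, w̄ₙ)`). -/
def KInvariant (φ : Fml) (n k : ℕ) : Prop :=
  ∀ (Θ : Set Sym), ↑(sigOf φ) ⊆ Θ →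
    ∀ (M N : Model) (a : M.D) (bs : List M.D) (c : N.D) (ds : List N.D),
      bs.length = n → ds.length = n →
      (∃ A, IsKAsim Θ M N n k A ∧ A true false [] a bs [] c ds) →
      Sat M a bs φ → Sat N c ds φ

/-- Invariance with respect to asimulations. -/
def AsimInvariant (φ : Fml) (n : ℕ) : Prop :=
  ∀ (Θ : Set Sym), ↑(sigOf φ) ⊆ Θ →
    ∀ (M N : Model) (a : M.D) (bs : List M.D) (c : N.D) (ds : List N.D),
      bs.length = n → ds.length = n →
      (∃ A, IsAsim Θ M N A ∧ A true false a bs c ds) →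
      Sat M a bs φ → Sat N c ds φ

def conjList : List Fml → Fml
  | [] => .neg .fls
  | φ :: l => .conj φ (conjList l)

def disjList : List Fml → Fml
  | [] => .fls
  | φ :: l => .disj φ (disjList l)

/-- A `(Σ_φ, (x, w̄ₙ), k)`-formula that is a standard x-translation. -/
def GoodFml (φ : Fml) (n k : ℕ) (ψ : Fml) : Prop :=
  ψ.syms ⊆ sigOf φ ∧ FreeOK n ψ ∧ ψ.deg ≤ k ∧ IsSTF ψ

/-- A complete `(φ, (x, w̄ₙ), k)`-conjunction, given by its list of conjuncts. -/
def CompleteConj (φ : Fml) (n k : ℕ) (L : List Fml) : Prop :=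
  (∀ ψ ∈ L, GoodFml φ n k ψ) ∧
  ∃ (M : Model) (a : M.D) (bs : List M.D), bs.length = n ∧
    Sat M a bs (conjList L) ∧ Sat M a bs φ ∧
    ∀ ψ : Fml, GoodFml φ n k ψ → Sat M a bs ψ → EntailsF (conjList L) ψ

/-- All Θ-formulas that are standard x-translations of intuitionistic formulas
true at `(α, a, ōₗ)` are true at `(β, c, d̄ₗ)`. -/
def ITLe (Θ : Set Sym) (α : Model) (a : α.D) (os : List α.D)
    (β : Model) (c : β.D) (ds : List β.D) : Prop :=
  ∀ i : IFml, ↑(ST i 1).syms ⊆ Θ → FreeOK os.length (ST i 1) →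
    Sat α a os (ST i 1) → Sat β c ds (ST i 1)

/-- ω-saturation: every type over finitely many parameters (the values of the
assignment `f` on the finite set `W`) in finitely many variables (`V`) that is
finitely satisfiable in `M` is realized in `M`. -/
def OmegaSaturated (M : Model) : Prop :=
  ∀ (f : ℕ → M.D) (V W : Finset ℕ) (Γ : Set Fml),
    (∀ ψ ∈ Γ, ↑ψ.free ⊆ (↑(V ∪ W) : Set ℕ)) →
    (∀ Γ' : Finset Fml, ↑Γ' ⊆ Γ →
      ∃ g : ℕ → M.D, (∀ v ∉ V, g v = f v) ∧ ∀ ψ ∈ Γ', ψ.eval M g) →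
    ∃ g : ℕ → M.D, (∀ v ∉ V, g v = f v) ∧ ∀ ψ ∈ Γ, ψ.eval M g

/-- The intuitionistic consequences of φ: Σ_φ-formulas in the variables
x, w̄ₙ that are standard x-translations and follow from φ. -/
def IC (φ : Fml) (n : ℕ) : Set Fml :=
  {ψ | ψ.syms ⊆ sigOf φ ∧ FreeOK n ψ ∧ IsSTF ψ ∧ EntailsF φ ψ}

/-! K-relative notions. -/

def KSatisfiable (K : Set Model) (Γ : Set Fml) : Prop :=
  ∃ M ∈ K, ∃ f : ℕ → M.D, ∀ ψ ∈ Γ, ψ.eval M f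

def KEntails (K : Set Model) (φ ψ : Fml) : Prop := ¬ KSatisfiable K {φ, ψ.neg}

def KEquiv (K : Set Model) (φ ψ : Fml) : Prop := KEntails K φ ψ ∧ KEntails K ψ φ

def KAsimInvariant (K : Set Model) (φ : Fml) (n : ℕ) : Prop :=
  ∀ (Θ : Set Sym), ↑(sigOf φ) ⊆ Θ →
    ∀ (M N : Model), M ∈ K → N ∈ K →
      ∀ (a : M.D) (bs : List M.D) (c : N.D) (ds : List N.D),
        bs.length = n → ds.length = n →
        (∃ A, IsAsim Θ M N A ∧ A true false a bs c ds) →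
        Sat M a bs φ → Sat N c ds φ

end IPC

/-!
A complete conjunction `Ψ` holds together with `φ` at some point, so the hypothesis for the pair
`(Ψ, Ψ)` yields `Ψ ⊨ φ`; and every point satisfying `φ` satisfies the complete conjunction of the
standard translations true there. So `φ` is equivalent to the disjunction of all complete
conjunctions, and it remains to see that finitely many suffice. Up to renaming bound object
variables and logical equivalence, a translation of degree `≤ k` over the finite vocabulary `Σ_φ`
with free variables among `x, w̄ₙ` is a disjunction of conjunctions of finitely many `components`,
built by recursion on `k` from atoms and from implications and quantifications of such
disjunctions. A complete conjunction is therefore determined by the components it contains, and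
since `∧` and `∨` of translations are translations, the finite disjunction is one as well.
-/

namespace IPC

open Classical

def IFml.deg : IFml → ℕ
  | .atom _ _ _ => 0
  | .fls => 0
  | .conj i j => max i.deg j.deg
  | .disj i j => max i.deg j.deg
  | .impl i j => max i.deg j.deg + 1
  | .ex _ i => i.deg + 1
  | .all _ i => i.deg + 2

def IFml.syms : IFml → Finset Sym
  | .atom n m _ => {.P n m}
  | .fls => ∅
  | .conj i j => i.syms ∪ j.syms
  | .disj i j => i.syms ∪ j.syms
  | .impl i j => insert .R (i.syms ∪ j.syms)
  | .ex _ i => insert .E i.syms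
  | .all _ i => insert .R (insert .E i.syms)

def IFml.free : IFml → Finset ℕ
  | .atom _ _ args => Finset.univ.image args
  | .fls => ∅
  | .conj i j => i.free ∪ j.free
  | .disj i j => i.free ∪ j.free
  | .impl i j => i.free ∪ j.free
  | .ex v i => i.free.erase v
  | .all v i => i.free.erase v

theorem deg_ST (i : IFml) (x : ℕ) : (ST i x).deg = i.deg := by
  induction i generalizing x <;> simp [ST, Fml.deg, IFml.deg, *]

theorem syms_ST (i : IFml) (x : ℕ) : (ST i x).syms = i.syms := by
  induction i generalizing x <;> simp [ST, Fml.syms, IFml.syms, *]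

theorem free_ST (i : IFml) {x : ℕ} (hx : x % 2 = 1) :
    (ST i x).free = insert x (i.free.image (2 * ·)) := by
  induction i generalizing x with
  | atom n m args =>
    ext v
    simp only [ST, Fml.free, IFml.free, Finset.mem_insert, Finset.mem_image, Sym.arity,
      Fin.exists_fin_succ, Fin.cons_zero, Fin.cons_succ]
    grind
  | fls => simp [ST, Fml.free, IFml.free]
  | conj i j ihi ihj | disj i j ihi ihj =>
    simp only [ST, Fml.free, IFml.free, ihi hx, ihj hx, Finset.image_union]
    grind
  | impl i j ihi ihj =>
    ext v
    simp only [ST, Fml.free, IFml.free, ihi (x := x + 2) (by omega), ihj (x := x + 2) (by omega),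
      Finset.mem_insert, Finset.mem_union, Finset.mem_erase, Finset.mem_image, Sym.arity,
      Fin.exists_fin_two, Matrix.cons_val_zero, Matrix.cons_val_one]
    grind
  | ex w i ih =>
    ext v
    simp only [ST, Fml.free, IFml.free, ih hx, Finset.mem_insert, Finset.mem_union,
      Finset.mem_erase, Finset.mem_image, Sym.arity, Fin.exists_fin_two, Matrix.cons_val_zero,
      Matrix.cons_val_one]
    grind
  | all w i ih =>
    ext v
    simp only [ST, Fml.free, IFml.free, ih (x := x + 2) (by omega), Finset.mem_insert,
      Finset.mem_union, Finset.mem_erase, Finset.mem_image, Sym.arity, Fin.exists_fin_two,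
      Matrix.cons_val_zero, Matrix.cons_val_one]
    grind

theorem Fml.eval_atom_congr {M : Model} {f g : ℕ → M.D} {s : Sym} {a b : Fin s.arity → ℕ}
    (h : ∀ i, f (a i) = g (b i)) : (Fml.atom s a).eval M f ↔ (Fml.atom s b).eval M g := by
  simp only [Fml.eval, h]

theorem Fml.eval_congr {M : Model} (ψ : Fml) {f g : ℕ → M.D} (hfg : ∀ v ∈ ψ.free, f v = g v) :
    ψ.eval M f ↔ ψ.eval M g := by
  induction ψ generalizing f g with
  | atom s args => exact Fml.eval_atom_congr fun i => hfg (args i) (by simp [Fml.free])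
  | eq v w => simp [Fml.eval, hfg v (by simp [Fml.free]), hfg w (by simp [Fml.free])]
  | fls => rfl
  | neg φ ih => exact not_congr (ih hfg)
  | conj φ ψ ih₁ ih₂ | disj φ ψ ih₁ ih₂ | impl φ ψ ih₁ ih₂ =>
    simp only [Fml.free, Finset.mem_union] at hfg
    simp only [Fml.eval, ih₁ fun v hv => hfg v (.inl hv), ih₂ fun v hv => hfg v (.inr hv)]
  | all v φ ih | ex v φ ih =>
    have hupd (d : M.D) : ∀ u ∈ φ.free, Function.update f v d u = Function.update g v d u := by
      intro u hu
      by_cases huv : u = v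
      · simp [huv]
      · simpa [huv] using hfg u (Finset.mem_erase.2 ⟨huv, hu⟩)
    simp only [Fml.eval, fun d => ih (hupd d)]

theorem eval_conjList {M : Model} {f : ℕ → M.D} (L : List Fml) :
    (conjList L).eval M f ↔ ∀ ψ ∈ L, ψ.eval M f := by
  induction L <;> simp [conjList, Fml.eval, *]

theorem eval_disjList {M : Model} {f : ℕ → M.D} (L : List Fml) :
    (disjList L).eval M f ↔ ∃ ψ ∈ L, ψ.eval M f := by
  induction L <;> simp [disjList, Fml.eval, *]

theorem exists_assignment (M : Model) (a : M.D) (bs : List M.D) :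
    ∃ f : ℕ → M.D, f 1 = a ∧ ∀ i : Fin bs.length, f (2 * i) = bs.get i := by
  refine ⟨fun v => if h : v % 2 = 0 ∧ v / 2 < bs.length then bs.get ⟨v / 2, h.2⟩ else a,
    by simp, fun i => ?_⟩
  have hi : 2 * (i : ℕ) / 2 = i := by omega
  simp [hi]

theorem sat_iff_eval {M : Model} {a : M.D} {bs : List M.D} {n : ℕ} {ψ : Fml} {f : ℕ → M.D}
    (hlen : bs.length = n) (hψ : FreeOK n ψ) (ha : f 1 = a)
    (hbs : ∀ i : Fin bs.length, f (2 * i) = bs.get i) :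
    Sat M a bs ψ ↔ ψ.eval M f := by
  refine ⟨fun h => h f ha hbs, fun h g hga hgbs => (ψ.eval_congr fun v hv => ?_).1 h⟩
  obtain rfl | ⟨i, hi, rfl⟩ := hψ v hv
  · rw [ha, hga]
  · subst hlen
    rw [hbs ⟨i, hi⟩, hgbs ⟨i, hi⟩]

/-- The empty conjunction is `⊥ → ⊥`, of degree 1; a nonempty list is conjoined without it. -/
def iconj : List IFml → IFml
  | [] => .impl .fls .fls
  | [c] => c
  | c :: d :: l => .conj c (iconj (d :: l))

def idisj (l : List IFml) : IFml := l.foldr .disj .fls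

noncomputable def dnf (T : Finset (Finset IFml)) : IFml :=
  idisj (T.toList.map fun S => iconj S.toList)

section Eval

variable {M : Model} {f : ℕ → M.D} (x : ℕ)

theorem eval_ST_iconj (l : List IFml) :
    (ST (iconj l) x).eval M f ↔ ∀ c ∈ l, (ST c x).eval M f := by
  induction l using iconj.induct <;> simp_all [iconj, ST, Fml.eval]

theorem eval_ST_idisj (l : List IFml) :
    (ST (idisj l) x).eval M f ↔ ∃ c ∈ l, (ST c x).eval M f := by
  induction l <;> simp_all [idisj, ST, Fml.eval]

theorem eval_ST_dnf (T : Finset (Finset IFml)) :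
    (ST (dnf T) x).eval M f ↔ ∃ S ∈ T, ∀ c ∈ S, (ST c x).eval M f := by
  simp [dnf, eval_ST_idisj, eval_ST_iconj]

end Eval

section DnfAlgebra

variable {M : Model} {g : ℕ → M.D} {x : ℕ}

theorem eval_ST_dnf_singleton (c : IFml) :
    (ST (dnf {{c}}) x).eval M g ↔ (ST c x).eval M g := by
  simp [eval_ST_dnf]

theorem eval_ST_dnf_union (T₁ T₂ : Finset (Finset IFml)) :
    (ST (dnf (T₁ ∪ T₂)) x).eval M g ↔ (ST (.disj (dnf T₁) (dnf T₂)) x).eval M g := by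
  simp only [ST, Fml.eval, eval_ST_dnf, Finset.mem_union, or_and_right, exists_or]

theorem eval_ST_dnf_image_union_product (T₁ T₂ : Finset (Finset IFml)) :
    (ST (dnf ((T₁ ×ˢ T₂).image fun p => p.1 ∪ p.2)) x).eval M g ↔
      (ST (.conj (dnf T₁) (dnf T₂)) x).eval M g := by
  simp only [ST, Fml.eval, eval_ST_dnf, Finset.mem_image, Finset.mem_product]
  constructor
  · rintro ⟨_, ⟨⟨S₁, S₂⟩, ⟨h₁, h₂⟩, rfl⟩, hS⟩
    obtain ⟨hS₁, hS₂⟩ := Finset.forall_mem_union.1 hS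
    exact ⟨⟨S₁, h₁, hS₁⟩, ⟨S₂, h₂, hS₂⟩⟩
  · rintro ⟨⟨S₁, h₁, hS₁⟩, ⟨S₂, h₂, hS₂⟩⟩
    exact ⟨_, ⟨⟨S₁, S₂⟩, ⟨h₁, h₂⟩, rfl⟩, Finset.forall_mem_union.2 ⟨hS₁, hS₂⟩⟩

end DnfAlgebra

def IFml.Bounded (Sg : Finset Sym) (k V : ℕ) (i : IFml) : Prop :=
  i.deg ≤ k ∧ i.syms ⊆ Sg ∧ i.free ⊆ Finset.range V

section Bounded

variable {Sg : Finset Sym} {k V : ℕ}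

theorem IFml.Bounded.conj {i j : IFml} (hi : i.Bounded Sg k V) (hj : j.Bounded Sg k V) :
    (IFml.conj i j).Bounded Sg k V :=
  ⟨max_le hi.1 hj.1, Finset.union_subset hi.2.1 hj.2.1, Finset.union_subset hi.2.2 hj.2.2⟩

theorem IFml.Bounded.disj {i j : IFml} (hi : i.Bounded Sg k V) (hj : j.Bounded Sg k V) :
    (IFml.disj i j).Bounded Sg k V :=
  ⟨max_le hi.1 hj.1, Finset.union_subset hi.2.1 hj.2.1, Finset.union_subset hi.2.2 hj.2.2⟩

theorem IFml.Bounded.impl {i j : IFml} (hR : Sym.R ∈ Sg) (hi : i.Bounded Sg k V)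
    (hj : j.Bounded Sg k V) : (IFml.impl i j).Bounded Sg (k + 1) V :=
  ⟨by simpa [IFml.deg] using And.intro hi.1 hj.1,
    Finset.insert_subset hR (Finset.union_subset hi.2.1 hj.2.1),
    Finset.union_subset hi.2.2 hj.2.2⟩

theorem IFml.Bounded.ex {i : IFml} (hE : Sym.E ∈ Sg) (hi : i.Bounded Sg k (V + 1)) :
    (IFml.ex V i).Bounded Sg (k + 1) V := by
  refine ⟨by simpa [IFml.deg] using hi.1, Finset.insert_subset hE hi.2.1, fun v hv => ?_⟩
  have := hi.2.2 (Finset.mem_of_mem_erase hv)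
  simp_all [IFml.free]
  omega

theorem IFml.Bounded.all {i : IFml} (hR : Sym.R ∈ Sg) (hE : Sym.E ∈ Sg)
    (hi : i.Bounded Sg k (V + 1)) : (IFml.all V i).Bounded Sg (k + 2) V := by
  refine ⟨by simpa [IFml.deg] using hi.1,
    Finset.insert_subset hR (Finset.insert_subset hE hi.2.1), fun v hv => ?_⟩
  have := hi.2.2 (Finset.mem_of_mem_erase hv)
  simp_all [IFml.free]
  omega

theorem bounded_iconj {l : List IFml} (hl : l ≠ []) (h : ∀ c ∈ l, c.Bounded Sg k V) :
    (iconj l).Bounded Sg k V := by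
  induction l using iconj.induct with
  | case1 => exact absurd rfl hl
  | case2 c => exact h c (by simp)
  | case3 c d l ih =>
    exact (h c (by simp)).conj (ih (by simp) fun e he => h e (List.mem_cons_of_mem c he))

theorem bounded_idisj {l : List IFml} (h : ∀ c ∈ l, c.Bounded Sg k V) :
    (idisj l).Bounded Sg k V := by
  induction l with
  | nil => exact ⟨Nat.zero_le k, Finset.empty_subset _, Finset.empty_subset _⟩
  | cons c l ih => exact (h c (by simp)).disj (ih fun e he => h e (List.mem_cons_of_mem c he))

theorem bounded_dnf {T : Finset (Finset IFml)}
    (hT : ∀ S ∈ T, S.Nonempty ∧ ∀ c ∈ S, c.Bounded Sg k V) : (dnf T).Bounded Sg k V := by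
  refine bounded_idisj fun c hc => ?_
  obtain ⟨S, hS, rfl⟩ := List.mem_map.1 hc
  obtain ⟨hne, hb⟩ := hT S (Finset.mem_toList.1 hS)
  exact bounded_iconj (by simpa using hne.ne_empty) fun c hc => hb c (Finset.mem_toList.1 hc)

end Bounded

noncomputable def atomsOver (Sg : Finset Sym) (V : ℕ) : Finset IFml :=
  Sg.biUnion fun
    | .P n m => (Finset.univ : Finset (Fin n → Fin V)).image fun as => .atom n m fun j => as j
    | _ => ∅

def IsDnfOver (C : Finset IFml) (T : Finset (Finset IFml)) : Prop :=
  ∀ S ∈ T, S.Nonempty ∧ S ⊆ C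

section IsDnfOver

variable {C : Finset IFml} {T₁ T₂ : Finset (Finset IFml)}

theorem isDnfOver_singleton {c : IFml} (hc : c ∈ C) : IsDnfOver C {{c}} := by
  simpa [IsDnfOver] using hc

theorem IsDnfOver.union (h₁ : IsDnfOver C T₁) (h₂ : IsDnfOver C T₂) : IsDnfOver C (T₁ ∪ T₂) :=
  fun S hS => (Finset.mem_union.1 hS).elim (h₁ S) (h₂ S)

theorem IsDnfOver.image_union_product (h₁ : IsDnfOver C T₁) (h₂ : IsDnfOver C T₂) :
    IsDnfOver C ((T₁ ×ˢ T₂).image fun p => p.1 ∪ p.2) := by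
  simp only [IsDnfOver, Finset.mem_image, Finset.mem_product]
  rintro _ ⟨⟨S₁, S₂⟩, ⟨hS₁, hS₂⟩, rfl⟩
  exact ⟨(h₁ S₁ hS₁).1.mono Finset.subset_union_left,
    Finset.union_subset (h₁ S₁ hS₁).2 (h₂ S₂ hS₂).2⟩

end IsDnfOver

noncomputable def dnfsOver (C : Finset IFml) : Finset IFml :=
  ((C.powerset.erase ∅).powerset).image dnf

/-- Up to renaming of object variables and equivalence, every formula of degree `≤ k` with symbols
in `Sg` and free object variables `< V` is a disjunction of conjunctions of these. -/
noncomputable def components (Sg : Finset Sym) : ℕ → ℕ → Finset IFml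
  | 0, V => atomsOver Sg V
  | 1, V => atomsOver Sg V
      ∪ (dnfsOver (components Sg 0 V) ×ˢ dnfsOver (components Sg 0 V)).image
          (fun p => .impl p.1 p.2)
      ∪ (dnfsOver (components Sg 0 (V + 1))).image (.ex V)
  | k + 2, V => atomsOver Sg V
      ∪ (dnfsOver (components Sg (k + 1) V) ×ˢ dnfsOver (components Sg (k + 1) V)).image
          (fun p => .impl p.1 p.2)
      ∪ (dnfsOver (components Sg (k + 1) (V + 1))).image (.ex V)
      ∪ (dnfsOver (components Sg k (V + 1))).image (.all V)

section Components

variable {Sg : Finset Sym} {k V : ℕ}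

theorem atom_mem_atomsOver {n m : ℕ} (hP : Sym.P n m ∈ Sg) {as : Fin n → ℕ}
    (has : ∀ j, as j < V) : IFml.atom n m as ∈ atomsOver Sg V :=
  Finset.mem_biUnion.2 ⟨_, hP, Finset.mem_image.2 ⟨fun j => ⟨as j, has j⟩, Finset.mem_univ _, rfl⟩⟩

theorem IsDnfOver.dnf_mem_dnfsOver {C : Finset IFml} {T : Finset (Finset IFml)}
    (hT : IsDnfOver C T) : dnf T ∈ dnfsOver C := by
  refine Finset.mem_image.2 ⟨T, Finset.mem_powerset.2 fun S hS => ?_, rfl⟩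
  simpa [Finset.nonempty_iff_ne_empty] using hT S hS

theorem atomsOver_subset_components : atomsOver Sg V ⊆ components Sg k V := by
  match k with
  | 0 => simp [components]
  | 1 => simp [components, Finset.union_assoc]
  | k + 2 => simp [components, Finset.union_assoc]

theorem impl_mem_components {A B : IFml} (hA : A ∈ dnfsOver (components Sg k V))
    (hB : B ∈ dnfsOver (components Sg k V)) : IFml.impl A B ∈ components Sg (k + 1) V := by
  match k with
  | 0 => simp_all [components]
  | k + 1 => simp [components, hA, hB]

theorem ex_mem_components {A : IFml} (hA : A ∈ dnfsOver (components Sg k (V + 1))) :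
    IFml.ex V A ∈ components Sg (k + 1) V := by
  match k with
  | 0 => simp_all [components]
  | k + 1 => simp [components, hA]

theorem all_mem_components {A : IFml} (hA : A ∈ dnfsOver (components Sg k (V + 1))) :
    IFml.all V A ∈ components Sg (k + 2) V := by
  simp [components, hA]

theorem bounded_of_mem_atomsOver {c : IFml} (hc : c ∈ atomsOver Sg V) : c.Bounded Sg k V := by
  obtain ⟨s, hs, hc⟩ := Finset.mem_biUnion.1 hc
  match s, hc with
  | .P n m, hc =>
    obtain ⟨as, -, rfl⟩ := Finset.mem_image.1 hc
    exact ⟨Nat.zero_le k, by simpa [IFml.syms] using hs, by simp [IFml.free, Finset.subset_iff]⟩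

theorem bounded_of_mem_dnfsOver {C : Finset IFml} (hC : ∀ c ∈ C, c.Bounded Sg k V) {c : IFml}
    (hc : c ∈ dnfsOver C) : c.Bounded Sg k V := by
  obtain ⟨T, hT, rfl⟩ := Finset.mem_image.1 hc
  refine bounded_dnf fun S hS => ?_
  obtain ⟨hne, hSC⟩ := Finset.mem_erase.1 (Finset.mem_powerset.1 hT hS)
  exact ⟨Finset.nonempty_iff_ne_empty.2 hne, fun c hc => hC c (Finset.mem_powerset.1 hSC hc)⟩

theorem bounded_of_mem_components (hR : Sym.R ∈ Sg) (hE : Sym.E ∈ Sg) {c : IFml}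
    (hc : c ∈ components Sg k V) : c.Bounded Sg k V := by
  induction k using Nat.strong_induction_on generalizing V c with
  | _ k ih =>
  have hdnfs {j W} (hj : j < k) {A} (hA : A ∈ dnfsOver (components Sg j W)) :
      A.Bounded Sg j W :=
    bounded_of_mem_dnfsOver (fun _ => ih j hj) hA
  match k with
  | 0 => exact bounded_of_mem_atomsOver hc
  | 1 =>
    rw [components] at hc
    simp only [Finset.mem_union, Finset.mem_image, Finset.mem_product] at hc
    rcases hc with (hc | ⟨⟨A, B⟩, ⟨hA, hB⟩, rfl⟩) | ⟨A, hA, rfl⟩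
    · exact bounded_of_mem_atomsOver hc
    · exact (hdnfs (by omega) hA).impl hR (hdnfs (by omega) hB)
    · exact (hdnfs (by omega) hA).ex hE
  | k + 2 =>
    rw [components] at hc
    simp only [Finset.mem_union, Finset.mem_image, Finset.mem_product] at hc
    rcases hc with ((hc | ⟨⟨A, B⟩, ⟨hA, hB⟩, rfl⟩) | ⟨A, hA, rfl⟩) | ⟨A, hA, rfl⟩
    · exact bounded_of_mem_atomsOver hc
    · exact (hdnfs (by omega) hA).impl hR (hdnfs (by omega) hB)
    · exact (hdnfs (by omega) hA).ex hE
    · exact (hdnfs (by omega) hA).all hR hE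

end Components

/-- `j` says under the renaming `σ` of object variables what `i` says. -/
def RenEquiv (σ : ℕ → ℕ) (i j : IFml) : Prop :=
  ∀ x, x % 2 = 1 → ∀ (M : Model) (f g : ℕ → M.D), f x = g x →
    (∀ v ∈ i.free, f (2 * v) = g (2 * σ v)) → ((ST i x).eval M f ↔ (ST j x).eval M g)

namespace RenEquiv

variable {σ : ℕ → ℕ} {i i' j j' : IFml}

theorem trans_eval (h : RenEquiv σ i j)
    (h' : ∀ x (M : Model) (g : ℕ → M.D), (ST j x).eval M g ↔ (ST j' x).eval M g) :
    RenEquiv σ i j' :=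
  fun x hx M f g hxg hfg => (h x hx M f g hxg hfg).trans (h' x M g)

theorem atom (n m : ℕ) (args : Fin n → ℕ) :
    RenEquiv σ (.atom n m args) (.atom n m (σ ∘ args)) := by
  intro x _ M f g hxg hfg
  simp only [IFml.free, Finset.mem_image, Finset.mem_univ, true_and, forall_exists_index,
    forall_apply_eq_imp_iff] at hfg
  exact Fml.eval_atom_congr (Fin.cases hxg hfg)

theorem conj (hi : RenEquiv σ i i') (hj : RenEquiv σ j j') :
    RenEquiv σ (.conj i j) (.conj i' j') := by
  intro x hx M f g hxg hfg
  simp only [IFml.free, Finset.mem_union] at hfg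
  exact and_congr (hi x hx M f g hxg fun v hv => hfg v (.inl hv))
    (hj x hx M f g hxg fun v hv => hfg v (.inr hv))

theorem disj (hi : RenEquiv σ i i') (hj : RenEquiv σ j j') :
    RenEquiv σ (.disj i j) (.disj i' j') := by
  intro x hx M f g hxg hfg
  simp only [IFml.free, Finset.mem_union] at hfg
  exact or_congr (hi x hx M f g hxg fun v hv => hfg v (.inl hv))
    (hj x hx M f g hxg fun v hv => hfg v (.inr hv))

theorem impl (hi : RenEquiv σ i i') (hj : RenEquiv σ j j') :
    RenEquiv σ (.impl i j) (.impl i' j') := by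
  intro x hx M f g hxg hfg
  simp only [IFml.free, Finset.mem_union] at hfg
  simp only [ST, Fml.eval]
  refine forall_congr' fun d => ?_
  set f' := Function.update f (x + 2) d
  set g' := Function.update g (x + 2) d
  have hx' : f' (x + 2) = g' (x + 2) := by simp [f', g']
  have hfg' : ∀ v, f (2 * v) = g (2 * σ v) → f' (2 * v) = g' (2 * σ v) := by
    intro v hv
    simp [f', g', show 2 * v ≠ x + 2 by omega, show 2 * σ v ≠ x + 2 by omega, hv]
  have hx : f' x = g' x := by simp [f', g', hxg]
  exact imp_congr (Fml.eval_atom_congr (Fin.forall_fin_two.2 ⟨hx, hx'⟩))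
    (imp_congr (hi (x + 2) (by omega) M f' g' hx' fun v hv => hfg' v (hfg v (.inl hv)))
      (hj (x + 2) (by omega) M f' g' hx' fun v hv => hfg' v (hfg v (.inr hv))))

theorem ex {w V : ℕ} (hσ : ∀ v ∈ (IFml.ex w i).free, σ v ≠ V)
    (h : RenEquiv (Function.update σ w V) i i') : RenEquiv σ (.ex w i) (.ex V i') := by
  intro x hx M f g hxg hfg
  simp only [IFml.free, Finset.mem_erase] at hfg hσ
  simp only [ST, Fml.eval]
  refine exists_congr fun d => ?_
  set f' := Function.update f (2 * w) d
  set g' := Function.update g (2 * V) d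
  have hx' : f' x = g' x := by simp [f', g', show x ≠ 2 * w by omega, show x ≠ 2 * V by omega, hxg]
  have hw : f' (2 * w) = g' (2 * V) := by simp [f', g']
  refine and_congr (Fml.eval_atom_congr (Fin.forall_fin_two.2 ⟨hx', hw⟩)) (h x hx M f' g' hx' fun v hv => ?_)
  by_cases hvw : v = w
  · simp [f', g', hvw]
  · have := hσ v ⟨hvw, hv⟩
    simp [f', g', hvw, this, hfg v ⟨hvw, hv⟩]

theorem all {w V : ℕ} (hσ : ∀ v ∈ (IFml.all w i).free, σ v ≠ V)
    (h : RenEquiv (Function.update σ w V) i i') : RenEquiv σ (.all w i) (.all V i') := by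
  intro x hx M f g hxg hfg
  simp only [IFml.free, Finset.mem_erase] at hfg hσ
  simp only [ST, Fml.eval]
  refine forall_congr' fun d => forall_congr' fun e => ?_
  set f' := Function.update (Function.update f (x + 2) d) (2 * w) e
  set g' := Function.update (Function.update g (x + 2) d) (2 * V) e
  have hx : f' x = g' x := by
    simp [f', g', show x ≠ 2 * w by omega, show x ≠ 2 * V by omega, hxg]
  have hx' : f' (x + 2) = g' (x + 2) := by
    simp [f', g', show x + 2 ≠ 2 * w by omega, show x + 2 ≠ 2 * V by omega]
  have hw : f' (2 * w) = g' (2 * V) := by simp [f', g']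
  refine imp_congr (and_congr (Fml.eval_atom_congr (Fin.forall_fin_two.2 ⟨hx, hx'⟩))
    (Fml.eval_atom_congr (Fin.forall_fin_two.2 ⟨hx', hw⟩))) (h (x + 2) (by omega) M f' g' hx' fun v hv => ?_)
  by_cases hvw : v = w
  · simp [f', g', hvw]
  · have := hσ v ⟨hvw, hv⟩
    simp [f', g', hvw, this, show 2 * v ≠ x + 2 by omega, show 2 * σ v ≠ x + 2 by omega,
      hfg v ⟨hvw, hv⟩]

end RenEquiv

theorem update_lt_succ {σ : ℕ → ℕ} {w V : ℕ} {s : Finset ℕ} (hσ : ∀ v ∈ s.erase w, σ v < V) :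
    ∀ v ∈ s, Function.update σ w V v < V + 1 := by
  intro v hv
  by_cases hvw : v = w
  · simp [hvw]
  · simpa [hvw] using (hσ v (Finset.mem_erase.2 ⟨hvw, hv⟩)).trans (Nat.lt_succ_self V)

theorem exists_renEquiv_dnf {Sg : Finset Sym} (i : IFml) {k V : ℕ} {σ : ℕ → ℕ}
    (hdeg : i.deg ≤ k) (hsyms : i.syms ⊆ Sg) (hσ : ∀ v ∈ i.free, σ v < V) :
    ∃ T, IsDnfOver (components Sg k V) T ∧ RenEquiv σ i (dnf T) := by
  induction i generalizing k V σ with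
  | atom n m args =>
    have hP : Sym.P n m ∈ Sg := hsyms (by simp [IFml.syms])
    have hargs : ∀ j, (σ ∘ args) j < V := fun j => hσ _ (by simp [IFml.free])
    exact ⟨_, isDnfOver_singleton (atomsOver_subset_components (atom_mem_atomsOver hP hargs)),
      (RenEquiv.atom n m args).trans_eval fun _ _ _ => (eval_ST_dnf_singleton _).symm⟩
  | fls => exact ⟨∅, by simp [IsDnfOver], fun _ _ _ _ _ _ _ => by simp [ST, Fml.eval, eval_ST_dnf]⟩
  | conj i j ihi ihj =>
    simp only [IFml.deg, max_le_iff] at hdeg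
    simp only [IFml.syms, Finset.union_subset_iff] at hsyms
    simp only [IFml.free, Finset.mem_union, or_imp, forall_and] at hσ
    obtain ⟨T₁, hT₁, h₁⟩ := ihi hdeg.1 hsyms.1 hσ.1
    obtain ⟨T₂, hT₂, h₂⟩ := ihj hdeg.2 hsyms.2 hσ.2
    exact ⟨_, hT₁.image_union_product hT₂,
      (h₁.conj h₂).trans_eval fun _ _ _ => (eval_ST_dnf_image_union_product _ _).symm⟩
  | disj i j ihi ihj =>
    simp only [IFml.deg, max_le_iff] at hdeg
    simp only [IFml.syms, Finset.union_subset_iff] at hsyms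
    simp only [IFml.free, Finset.mem_union, or_imp, forall_and] at hσ
    obtain ⟨T₁, hT₁, h₁⟩ := ihi hdeg.1 hsyms.1 hσ.1
    obtain ⟨T₂, hT₂, h₂⟩ := ihj hdeg.2 hsyms.2 hσ.2
    exact ⟨_, hT₁.union hT₂, (h₁.disj h₂).trans_eval fun _ _ _ => (eval_ST_dnf_union _ _).symm⟩
  | impl i j ihi ihj =>
    obtain ⟨k, rfl⟩ : ∃ k', k = k' + 1 := ⟨k - 1, by simp only [IFml.deg] at hdeg; omega⟩
    simp only [IFml.deg, Nat.add_le_add_iff_right, max_le_iff] at hdeg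
    simp only [IFml.syms, Finset.insert_subset_iff, Finset.union_subset_iff] at hsyms
    simp only [IFml.free, Finset.mem_union, or_imp, forall_and] at hσ
    obtain ⟨T₁, hT₁, h₁⟩ := ihi hdeg.1 hsyms.2.1 hσ.1
    obtain ⟨T₂, hT₂, h₂⟩ := ihj hdeg.2 hsyms.2.2 hσ.2
    exact ⟨_, isDnfOver_singleton (impl_mem_components hT₁.dnf_mem_dnfsOver hT₂.dnf_mem_dnfsOver),
      (h₁.impl h₂).trans_eval fun _ _ _ => (eval_ST_dnf_singleton _).symm⟩
  | ex w i ih =>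
    obtain ⟨k, rfl⟩ : ∃ k', k = k' + 1 := ⟨k - 1, by simp only [IFml.deg] at hdeg; omega⟩
    simp only [IFml.deg, Nat.add_le_add_iff_right] at hdeg
    simp only [IFml.syms, Finset.insert_subset_iff] at hsyms
    obtain ⟨T, hT, h⟩ := ih hdeg hsyms.2 (update_lt_succ hσ)
    exact ⟨_, isDnfOver_singleton (ex_mem_components hT.dnf_mem_dnfsOver),
      (RenEquiv.ex (fun v hv => (hσ v hv).ne) h).trans_eval
        fun _ _ _ => (eval_ST_dnf_singleton _).symm⟩
  | all w i ih =>
    obtain ⟨k, rfl⟩ : ∃ k', k = k' + 2 := ⟨k - 2, by simp only [IFml.deg] at hdeg; omega⟩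
    simp only [IFml.deg, Nat.add_le_add_iff_right] at hdeg
    simp only [IFml.syms, Finset.insert_subset_iff] at hsyms
    obtain ⟨T, hT, h⟩ := ih hdeg hsyms.2.2 (update_lt_succ hσ)
    exact ⟨_, isDnfOver_singleton (all_mem_components hT.dnf_mem_dnfsOver),
      (RenEquiv.all (fun v hv => (hσ v hv).ne) h).trans_eval
        fun _ _ _ => (eval_ST_dnf_singleton _).symm⟩

section CompleteConjunctions

variable {φ : Fml} {n k : ℕ}

theorem freeOK_ST_iff (i : IFml) : FreeOK n (ST i 1) ↔ i.free ⊆ Finset.range n := by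
  simp only [FreeOK, free_ST i (x := 1) rfl, Finset.mem_insert, Finset.mem_image,
    Finset.subset_iff, Finset.mem_range]
  constructor
  · intro h v hv
    obtain h | ⟨j, hj, hvj⟩ := h _ (.inr ⟨v, hv, rfl⟩) <;> omega
  · rintro h _ (rfl | ⟨v, hv, rfl⟩)
    exacts [.inl rfl, .inr ⟨v, h hv, rfl⟩]

theorem goodFml_ST_iff (i : IFml) :
    GoodFml φ n k (ST i 1) ↔ i.Bounded (sigOf φ) k n := by
  simp only [GoodFml, IFml.Bounded, deg_ST, syms_ST, freeOK_ST_iff, IsSTF]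
  exact ⟨fun h => ⟨h.2.2.1, h.1, h.2.1⟩, fun h => ⟨h.2.1, h.2.2, h.1, i, rfl⟩⟩

theorem goodFml_ST_of_mem_components {c : IFml}
    (hc : c ∈ components (sigOf φ) k n) : GoodFml φ n k (ST c 1) :=
  (goodFml_ST_iff c).2 (bounded_of_mem_components (by simp [sigOf]) (by simp [sigOf]) hc)

theorem GoodFml.exists_dnf_components {ψ : Fml} (hψ : GoodFml φ n k ψ) :
    ∃ T : Finset (Finset IFml), (∀ S ∈ T, S ⊆ components (sigOf φ) k n) ∧
      ∀ (M : Model) (f : ℕ → M.D), ψ.eval M f ↔ ∃ S ∈ T, ∀ c ∈ S, (ST c 1).eval M f := by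
  obtain ⟨i, rfl⟩ := hψ.2.2.2
  obtain ⟨hdeg, hsyms, hfree⟩ := (goodFml_ST_iff i).1 hψ
  obtain ⟨T, hT, hi⟩ := exists_renEquiv_dnf i hdeg hsyms (σ := id)
    fun v hv => Finset.mem_range.1 (hfree hv)
  exact ⟨T, fun S hS => (hT S hS).2, fun M f =>
    (hi 1 rfl M f f rfl fun _ _ => rfl).trans (eval_ST_dnf 1 T)⟩

noncomputable def conjOf (S : Finset IFml) : List Fml := S.toList.map (ST · 1)

theorem eval_conjList_conjOf {M : Model} {f : ℕ → M.D} (S : Finset IFml) :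
    (conjList (conjOf S)).eval M f ↔ ∀ c ∈ S, (ST c 1).eval M f := by
  simp [conjOf, eval_conjList]

noncomputable def componentsTrueAt (φ : Fml) (n k : ℕ) (M : Model) (a : M.D) (bs : List M.D) :
    Finset IFml :=
  (components (sigOf φ) k n).filter fun c => Sat M a bs (ST c 1)

theorem completeConj_componentsTrueAt {M : Model} {a : M.D} {bs : List M.D}
    (hlen : bs.length = n) (hφ : Sat M a bs φ) :
    CompleteConj φ n k (conjOf (componentsTrueAt φ n k M a bs)) := by
  have hgood : ∀ c ∈ componentsTrueAt φ n k M a bs, GoodFml φ n k (ST c 1) :=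
    fun c hc => goodFml_ST_of_mem_components (Finset.mem_filter.1 hc).1
  refine ⟨by simpa [conjOf] using hgood, M, a, bs, hlen,
    fun f ha hbs => (eval_conjList_conjOf _).2 fun c hc => (Finset.mem_filter.1 hc).2 f ha hbs,
    hφ, fun ψ hψ hsat M' f' hf' => ?_⟩
  obtain ⟨T, hT, hψT⟩ := hψ.exists_dnf_components
  obtain ⟨f, ha, hbs⟩ := exists_assignment M a bs
  obtain ⟨S, hS, hSf⟩ := (hψT M f).1 (hsat f ha hbs)
  have hSpoint : S ⊆ componentsTrueAt φ n k M a bs := fun c hc =>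
    Finset.mem_filter.2 ⟨hT S hS hc,
      (sat_iff_eval hlen (goodFml_ST_of_mem_components (hT S hS hc)).2.1 ha hbs).2 (hSf c hc)⟩
  exact (hψT M' f').2 ⟨S, hS, fun c hc => (eval_conjList_conjOf _).1 hf' c (hSpoint hc)⟩

theorem CompleteConj.entailsF {L : List Fml} (hL : CompleteConj φ n k L)
    (hsep : ¬ (Satisfiable (.conj (conjList L) φ) ∧ Satisfiable (.conj (conjList L) (.neg φ)))) :
    EntailsF (conjList L) φ := by
  obtain ⟨-, M, a, bs, -, hL, hφ, -⟩ := hL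
  obtain ⟨f, ha, hbs⟩ := exists_assignment M a bs
  intro M' f' hf'
  by_contra hφ'
  exact hsep ⟨⟨M, f, hL f ha hbs, hφ f ha hbs⟩, ⟨M', f', hf', hφ'⟩⟩

noncomputable def completeConjs (φ : Fml) (n k : ℕ) : Finset (Finset IFml) :=
  (components (sigOf φ) k n).powerset.filter fun S => CompleteConj φ n k (conjOf S)

theorem eval_iff_exists_mem_completeConjs (hfree : FreeOK n φ)
    (hent : ∀ L, CompleteConj φ n k L → EntailsF (conjList L) φ) (M : Model) (f : ℕ → M.D) :
    φ.eval M f ↔ ∃ S ∈ completeConjs φ n k, ∀ c ∈ S, (ST c 1).eval M f := by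
  constructor
  · intro hφ
    set bs := List.ofFn fun i : Fin n => f (2 * i)
    have hbs : ∀ i : Fin bs.length, f (2 * i) = bs.get i := by simp [bs]
    have hlen : bs.length = n := List.length_ofFn
    have hsat := (sat_iff_eval hlen hfree rfl hbs).2 hφ
    refine ⟨componentsTrueAt φ n k M (f 1) bs, Finset.mem_filter.2 ⟨Finset.mem_powerset.2
      (Finset.filter_subset _ _), completeConj_componentsTrueAt hlen hsat⟩, fun c hc => ?_⟩
    exact (Finset.mem_filter.1 hc).2 f rfl hbs
  · rintro ⟨S, hS, hSf⟩
    exact hent _ (Finset.mem_filter.1 hS).2 M f ((eval_conjList_conjOf S).2 hSf)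

end CompleteConjunctions

/-- if no pair of complete (φ,(x,w̄ₙ),k)-conjunctions Ψ, Ψ' with
Ψ' ⊨ Ψ has both Ψ ∧ φ and Ψ' ∧ ¬φ satisfiable, then φ is equivalent to a finite
disjunction of complete conjunctions, hence to a standard translation. -/
theorem disjunction_of_complete_conjunctions (φ : Fml) (n k : ℕ) (hfree : FreeOK n φ)
    (h : ∀ L L' : List Fml, CompleteConj φ n k L → CompleteConj φ n k L' →
      EntailsF (conjList L') (conjList L) →
      ¬ (Satisfiable (.conj (conjList L) φ) ∧ Satisfiable (.conj (conjList L') (.neg φ)))) :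
    (∃ Ls : List (List Fml), (∀ L ∈ Ls, CompleteConj φ n k L) ∧
      FmlEquiv φ (disjList (Ls.map conjList))) ∧
    ∃ i : IFml, FmlEquiv φ (ST i 1) := by
  have hφ := eval_iff_exists_mem_completeConjs hfree
    fun L hL => hL.entailsF (h L L hL hL fun _ _ => id)
  refine ⟨⟨(completeConjs φ n k).toList.map conjOf, ?_, fun M f => ?_⟩,
    dnf (completeConjs φ n k), fun M f => (hφ M f).trans (eval_ST_dnf 1 _).symm⟩
  · simp only [List.mem_map, Finset.mem_toList]
    rintro _ ⟨S, hS, rfl⟩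
    exact (Finset.mem_filter.1 hS).2
  · simp [hφ, eval_disjList, eval_conjList_conjOf]

end IPC
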